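/- arXiv:2603.25449 — 9 statements merged into one kernel-verified Lean document; each statement's English description precedes it below -/
import Mathlib

section
/- Let A, B be arrays of length n with nonnegative integer entries, let α > 0, and define scaled arrays A'[i] = ⌊A[i]/m⌋ and B'[i] = ⌊B[i]/m⌋ for a positive integer m. Let C and C' denote the min-plus convolutions of (A,B) and (A',B') respectively. If A[i] + B[j] = C[i+j], then A'[i] + B'[j] = C'[i+j] + b for some b ∈ {0,1}. -/
/-! Flooring loses less than one unit per summand, so on pairs with comparable sums the scaled
sums can be out of order by at most one. Comparing the optimal pair `(i, j)` of `C` with an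
optimal pair of `C'` at the same index `i + j` therefore puts `A' i + B' j` within one of
`C' (i + j)`. -/

theorem Nat.div_add_div_le_div_add_div_add_one_of_add_le {a b c d : ℕ} (m : ℕ)
    (h : a + b ≤ c + d) : a / m + b / m ≤ c / m + d / m + 1 :=
  calc a / m + b / m ≤ (a + b) / m := Nat.div_add_div_le_add_div
    _ ≤ (c + d) / m := Nat.div_le_div_right h
    _ ≤ c / m + d / m + 1 := Nat.add_div_le_div_add_div_add_one c d m

theorem scaled_witness_general (n m : ℕ)
    (A B A' B' : ℕ → ℕ)
    (hA' : ∀ i, A' i = A i / m) (hB' : ∀ i, B' i = B i / m)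
    (C C' : ℕ → ℕ)
    (hC : ∀ k, k ≤ 2 * n - 2 →
      IsLeast {v : ℕ | ∃ i j, i < n ∧ j < n ∧ i + j = k ∧ v = A i + B j} (C k))
    (hC' : ∀ k, k ≤ 2 * n - 2 →
      IsLeast {v : ℕ | ∃ i j, i < n ∧ j < n ∧ i + j = k ∧ v = A' i + B' j} (C' k))
    (i j : ℕ) (hi : i < n) (hj : j < n)
    (h : A i + B j = C (i + j)) :
    ∃ b : ℕ, (b = 0 ∨ b = 1) ∧ A' i + B' j = C' (i + j) + b := by
  have hk : i + j ≤ 2 * n - 2 := by omega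
  obtain ⟨⟨i', j', hi', hj', hij', hC'_eq⟩, -⟩ := hC' (i + j) hk
  have hopt : A i + B j ≤ A i' + B j' := h ▸ (hC _ hk).2 ⟨i', j', hi', hj', hij', rfl⟩
  have hlow : C' (i + j) ≤ A' i + B' j := (hC' _ hk).2 ⟨i, j, hi, hj, rfl, rfl⟩
  have hup : A' i + B' j ≤ C' (i + j) + 1 := by
    rw [hC'_eq, hA', hB', hA', hB']
    exact Nat.div_add_div_le_div_add_div_add_one_of_add_le m hopt
  exact ⟨A' i + B' j - C' (i + j), by omega, by omega⟩

/-- If `A[i] + B[j] = C[i+j]` for the min-plus convolution `C` of `A, B`,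
then for the floor-scaled arrays `A', B'` with min-plus convolution `C'`, we have
`A'[i] + B'[j] = C'[i+j] + b` for some `b ∈ {0,1}`. -/
theorem scaled_witness (n m : ℕ) (hn : 0 < n) (hm : 0 < m)
    (A B A' B' : ℕ → ℕ)
    (hA' : ∀ i, A' i = A i / m) (hB' : ∀ i, B' i = B i / m)
    (C C' : ℕ → ℕ)
    (hC : ∀ k, k ≤ 2 * n - 2 →
      IsLeast {v : ℕ | ∃ i j, i < n ∧ j < n ∧ i + j = k ∧ v = A i + B j} (C k))
    (hC' : ∀ k, k ≤ 2 * n - 2 →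
      IsLeast {v : ℕ | ∃ i j, i < n ∧ j < n ∧ i + j = k ∧ v = A' i + B' j} (C' k))
    (i j : ℕ) (hi : i < n) (hj : j < n)
    (h : A i + B j = C (i + j)) :
    ∃ b : ℕ, (b = 0 ∨ b = 1) ∧ A' i + B' j = C' (i + j) + b :=
  scaled_witness_general n m A B A' B' hA' hB' C C' hC hC' i j hi hj h
end

section
/- Let P and Q be Pareto sets (antichains under coordinatewise ≤) of points with integer coordinates in [0,W]², where the minimum x-coordinate in each of P and Q is 0. Define arrays A, B : {0,...,W} → ℤ by A[i] = min over p ∈ P with p.x ≤ i of p.y (and W+1 if no such p exists), similarly B from Q. Then for any point s = p+q in the Pareto sum of P and Q (the set of non-dominated points of the Minkowski sum P+Q), the min-plus convolution C of A and B satisfies C[s.x] = s.y. -/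
/-!
Let `c = C[p.x + q.x]`. Taking `i = p.x`, `j = q.x` in the convolution gives `c ≤ A[p.x] + B[q.x] ≤
p.y + q.y`. Conversely `c = A[i] + B[j]` for some `i + j = p.x + q.x`, and since `P` and `Q` contain
a point with x-coordinate `0`, both prefix minima are attained: `A[i] = p'.y`, `B[j] = q'.y` with
`p'.x ≤ i`, `q'.x ≤ j`. Then `p' + q'` is weakly below `p + q` in both coordinates, so by
non-dominance it equals `p + q`, whence `c = p.y + q.y`.
-/

def IsPrefixMin (W : ℤ) (P : Set (ℤ × ℤ)) (A : ℤ → ℤ) : Prop :=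
  ∀ i : ℤ, 0 ≤ i → i ≤ W → (∃ p ∈ P, p.1 ≤ i) →
    (∃ p ∈ P, p.1 ≤ i ∧ A i = p.2) ∧ ∀ p ∈ P, p.1 ≤ i → A i ≤ p.2

def minPlusCandidates (W : ℤ) (A B : ℤ → ℤ) (k : ℤ) : Set ℤ :=
  {v : ℤ | ∃ i j : ℤ, 0 ≤ i ∧ i ≤ W ∧ 0 ≤ j ∧ j ≤ W ∧ i + j = k ∧ v = A i + B j}

namespace IsPrefixMin

variable {W : ℤ} {P : Set (ℤ × ℤ)} {A : ℤ → ℤ}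

theorem apply_fst_le_snd (hA : IsPrefixMin W P A) {p : ℤ × ℤ} (hp : p ∈ P) (h0 : 0 ≤ p.1)
    (hW : p.1 ≤ W) : A p.1 ≤ p.2 :=
  (hA p.1 h0 hW ⟨p, hp, le_rfl⟩).2 p hp le_rfl

theorem exists_eq_apply (hA : IsPrefixMin W P A) (hP0 : ∃ p ∈ P, p.1 = 0) {i : ℤ} (h0 : 0 ≤ i)
    (hW : i ≤ W) : ∃ p ∈ P, p.1 ≤ i ∧ A i = p.2 := by
  obtain ⟨p₀, hp₀, hx⟩ := hP0
  exact (hA i h0 hW ⟨p₀, hp₀, hx ▸ h0⟩).1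

end IsPrefixMin

section MinPlus

variable {W : ℤ} {P Q : Set (ℤ × ℤ)} {A B : ℤ → ℤ}

theorem le_snd_add_snd_of_mem_lowerBounds (hA : IsPrefixMin W P A) (hB : IsPrefixMin W Q B)
    {p q : ℤ × ℤ} (hp : p ∈ P) (hq : q ∈ Q) (hp0 : 0 ≤ p.1) (hpW : p.1 ≤ W) (hq0 : 0 ≤ q.1)
    (hqW : q.1 ≤ W) {c : ℤ} (hc : c ∈ lowerBounds (minPlusCandidates W A B (p.1 + q.1))) :
    c ≤ p.2 + q.2 :=
  calc c ≤ A p.1 + B q.1 := hc ⟨p.1, q.1, hp0, hpW, hq0, hqW, rfl, rfl⟩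
    _ ≤ p.2 + q.2 :=
      add_le_add (hA.apply_fst_le_snd hp hp0 hpW) (hB.apply_fst_le_snd hq hq0 hqW)

theorem exists_fst_add_fst_le_of_mem_minPlusCandidates (hA : IsPrefixMin W P A)
    (hB : IsPrefixMin W Q B) (hP0 : ∃ p ∈ P, p.1 = 0) (hQ0 : ∃ q ∈ Q, q.1 = 0) {k c : ℤ}
    (hc : c ∈ minPlusCandidates W A B k) :
    ∃ p ∈ P, ∃ q ∈ Q, p.1 + q.1 ≤ k ∧ p.2 + q.2 = c := by
  obtain ⟨i, j, hi0, hiW, hj0, hjW, rfl, rfl⟩ := hc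
  obtain ⟨p, hp, hpi, hAi⟩ := hA.exists_eq_apply hP0 hi0 hiW
  obtain ⟨q, hq, hqj, hBj⟩ := hB.exists_eq_apply hQ0 hj0 hjW
  exact ⟨p, hp, q, hq, add_le_add hpi hqj, by rw [hAi, hBj]⟩

end MinPlus

theorem pareto_sum_via_conv_general (W : ℤ)
    (P Q : Set (ℤ × ℤ))
    (hPW : ∀ p ∈ P, 0 ≤ p.1 ∧ p.1 ≤ W ∧ 0 ≤ p.2 ∧ p.2 ≤ W)
    (hQW : ∀ q ∈ Q, 0 ≤ q.1 ∧ q.1 ≤ W ∧ 0 ≤ q.2 ∧ q.2 ≤ W)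
    (hP0 : ∃ p ∈ P, p.1 = 0) (hQ0 : ∃ q ∈ Q, q.1 = 0)
    (A B : ℤ → ℤ)
    (hA : ∀ i : ℤ, 0 ≤ i → i ≤ W →
      (((∃ p ∈ P, p.1 ≤ i) →
        (∃ p ∈ P, p.1 ≤ i ∧ A i = p.2) ∧ (∀ p ∈ P, p.1 ≤ i → A i ≤ p.2)) ∧
       ((∀ p ∈ P, ¬ p.1 ≤ i) → A i = W + 1)))
    (hB : ∀ i : ℤ, 0 ≤ i → i ≤ W →
      (((∃ q ∈ Q, q.1 ≤ i) →
        (∃ q ∈ Q, q.1 ≤ i ∧ B i = q.2) ∧ (∀ q ∈ Q, q.1 ≤ i → B i ≤ q.2)) ∧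
       ((∀ q ∈ Q, ¬ q.1 ≤ i) → B i = W + 1)))
    (C : ℤ → ℤ)
    (hC : ∀ k : ℤ, 0 ≤ k → k ≤ 2 * W →
      IsLeast {v : ℤ | ∃ i j : ℤ, 0 ≤ i ∧ i ≤ W ∧ 0 ≤ j ∧ j ≤ W ∧ i + j = k ∧ v = A i + B j}
        (C k)) :
    ∀ p ∈ P, ∀ q ∈ Q,
      (∀ p' ∈ P, ∀ q' ∈ Q,
        ¬((p' + q').1 ≤ (p + q).1 ∧ (p' + q').2 ≤ (p + q).2 ∧ p' + q' ≠ p + q)) →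
      C (p.1 + q.1) = p.2 + q.2 := by
  intro p hp q hq hnd
  have hA' : IsPrefixMin W P A := fun i h0 hW => (hA i h0 hW).1
  have hB' : IsPrefixMin W Q B := fun i h0 hW => (hB i h0 hW).1
  obtain ⟨hp0, hpW, -⟩ := hPW p hp
  obtain ⟨hq0, hqW, -⟩ := hQW q hq
  obtain ⟨hmem, hlow⟩ := hC (p.1 + q.1) (by omega) (by omega)
  have hle := le_snd_add_snd_of_mem_lowerBounds hA' hB' hp hq hp0 hpW hq0 hqW hlow
  obtain ⟨p', hp', q', hq', hx, hy⟩ :=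
    exists_fst_add_fst_le_of_mem_minPlusCandidates hA' hB' hP0 hQ0 hmem
  have hsum : p' + q' = p + q := by
    by_contra hne
    exact hnd p' hp' q' hq' ⟨hx, by simp only [Prod.snd_add]; omega, hne⟩
  rw [← hy, ← Prod.snd_add, ← Prod.snd_add, hsum]

/-- For Pareto sets `P, Q ⊆ [0,W]² ∩ ℤ²` with minimum x-coordinate 0,
and the derived arrays `A, B` with min-plus convolution `C`, every non-dominated
point `s = p + q` of the Minkowski sum satisfies `C[s.x] = s.y`. -/
theorem pareto_sum_via_conv (W : ℤ) (hW : 0 ≤ W)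
    (P Q : Set (ℤ × ℤ))
    (hPareto_P : ∀ a ∈ P, ∀ b ∈ P, ¬(a.1 ≤ b.1 ∧ a.2 ≤ b.2 ∧ a ≠ b))
    (hPareto_Q : ∀ a ∈ Q, ∀ b ∈ Q, ¬(a.1 ≤ b.1 ∧ a.2 ≤ b.2 ∧ a ≠ b))
    (hPW : ∀ p ∈ P, 0 ≤ p.1 ∧ p.1 ≤ W ∧ 0 ≤ p.2 ∧ p.2 ≤ W)
    (hQW : ∀ q ∈ Q, 0 ≤ q.1 ∧ q.1 ≤ W ∧ 0 ≤ q.2 ∧ q.2 ≤ W)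
    (hP0 : ∃ p ∈ P, p.1 = 0) (hQ0 : ∃ q ∈ Q, q.1 = 0)
    (A B : ℤ → ℤ)
    (hA : ∀ i : ℤ, 0 ≤ i → i ≤ W →
      (((∃ p ∈ P, p.1 ≤ i) →
        (∃ p ∈ P, p.1 ≤ i ∧ A i = p.2) ∧ (∀ p ∈ P, p.1 ≤ i → A i ≤ p.2)) ∧
       ((∀ p ∈ P, ¬ p.1 ≤ i) → A i = W + 1)))
    (hB : ∀ i : ℤ, 0 ≤ i → i ≤ W →
      (((∃ q ∈ Q, q.1 ≤ i) →
        (∃ q ∈ Q, q.1 ≤ i ∧ B i = q.2) ∧ (∀ q ∈ Q, q.1 ≤ i → B i ≤ q.2)) ∧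
       ((∀ q ∈ Q, ¬ q.1 ≤ i) → B i = W + 1)))
    (C : ℤ → ℤ)
    (hC : ∀ k : ℤ, 0 ≤ k → k ≤ 2 * W →
      IsLeast {v : ℤ | ∃ i j : ℤ, 0 ≤ i ∧ i ≤ W ∧ 0 ≤ j ∧ j ≤ W ∧ i + j = k ∧ v = A i + B j}
        (C k)) :
    ∀ p ∈ P, ∀ q ∈ Q,
      (∀ p' ∈ P, ∀ q' ∈ Q,
        ¬((p' + q').1 ≤ (p + q).1 ∧ (p' + q').2 ≤ (p + q).2 ∧ p' + q' ≠ p + q)) →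
      C (p.1 + q.1) = p.2 + q.2 :=
  pareto_sum_via_conv_general W P Q hPW hQW hP0 hQ0 A B hA hB C hC
end

section
/- Let P, Q be Pareto sets with integer coordinates, A, B the derived monotone arrays as in the reduction, and C their min-plus convolution. Then the set S* = {(k, C[k]) : k = 0 or C[k] < C[k-1]} equals the Pareto sum of P and Q. -/
/-!
For `0 ≤ k ≤ 2W`, `C k` is the least `y`-coordinate of a point of `P + Q` with `x`-coordinate at
most `k`: an optimal split `k = i + j` realises `A i + B j` by points `p ∈ P`, `q ∈ Q` with
`p.1 ≤ i`, `q.1 ≤ j`, and conversely any `p + q` with `p.1 + q.1 ≤ k` is dominated by such a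
split. So `C` is the lower staircase of `P + Q`, and the points where this staircase strictly
drops are exactly the Pareto-minimal points of `P + Q`.
-/

open scoped Pointwise

theorem isLeast_snd_image_sep_iff {α β : Type*} [LE α] [LE β] {S : Set (α × β)} {k : α}
    {a : β} :
    IsLeast (Prod.snd '' {s ∈ S | s.1 ≤ k}) a ↔
      (∃ s ∈ S, s.1 ≤ k ∧ a = s.2) ∧ ∀ s ∈ S, s.1 ≤ k → a ≤ s.2 := by
  simp only [IsLeast, lowerBounds, Set.mem_image, Set.mem_ofPred_eq, forall_exists_index,
    and_imp, and_assoc, eq_comm (a := a)]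
  refine and_congr_right fun _ => ⟨fun h s hs hsk => h s hs hsk rfl, ?_⟩
  rintro h _ s hs hsk rfl
  exact h s hs hsk

theorem minimal_mem_prod_iff {α β : Type*} [PartialOrder α] [PartialOrder β] {S : Set (α × β)}
    {s : α × β} :
    Minimal (· ∈ S) s ↔ s ∈ S ∧ ∀ t ∈ S, ¬(t.1 ≤ s.1 ∧ t.2 ≤ s.2 ∧ t ≠ s) := by
  refine minimal_mem_iff.trans (and_congr_right fun _ => forall₂_congr fun t _ => ?_)
  rw [Prod.le_def, eq_comm]
  tauto

theorem isLeast_minkowski_of_conv {P Q : Set (ℤ × ℤ)} {W : ℤ} {A B C : ℤ → ℤ}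
    (hPW : ∀ p ∈ P, 0 ≤ p.1 ∧ p.1 ≤ W) (hQW : ∀ q ∈ Q, 0 ≤ q.1 ∧ q.1 ≤ W)
    (hA : ∀ i, 0 ≤ i → i ≤ W → IsLeast (Prod.snd '' {p ∈ P | p.1 ≤ i}) (A i))
    (hB : ∀ j, 0 ≤ j → j ≤ W → IsLeast (Prod.snd '' {q ∈ Q | q.1 ≤ j}) (B j))
    (hC : ∀ k : ℤ, 0 ≤ k → k ≤ 2 * W →
      IsLeast {v : ℤ | ∃ i j : ℤ, 0 ≤ i ∧ i ≤ W ∧ 0 ≤ j ∧ j ≤ W ∧ i + j = k ∧ v = A i + B j}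
        (C k))
    {k : ℤ} (hk0 : 0 ≤ k) (hkW : k ≤ 2 * W) :
    IsLeast (Prod.snd '' {s ∈ P + Q | s.1 ≤ k}) (C k) := by
  simp only [isLeast_snd_image_sep_iff] at hA hB ⊢
  constructor
  · obtain ⟨i, j, hi0, hiW, hj0, hjW, hij, hCk⟩ := (hC k hk0 hkW).1
    obtain ⟨p, hp, hpi, hAi⟩ := (hA i hi0 hiW).1
    obtain ⟨q, hq, hqj, hBj⟩ := (hB j hj0 hjW).1
    exact ⟨p + q, Set.add_mem_add hp hq, by simp only [Prod.fst_add]; omega,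
      by simp only [Prod.snd_add]; omega⟩
  · rintro _ ⟨p, hp, q, hq, rfl⟩ hpqk
    simp only [Prod.fst_add, Prod.snd_add] at hpqk ⊢
    obtain ⟨hp0, hpW⟩ := hPW p hp
    obtain ⟨hq0, hqW⟩ := hQW q hq
    -- Push as much of `k` as possible onto the `P` side without exceeding `W`.
    set i := max p.1 (k - W) with hi_def
    have hCk : C k ≤ A i + B (k - i) :=
      (hC k hk0 hkW).2 ⟨i, k - i, by omega, by omega, by omega, by omega, by omega, rfl⟩
    have hAi := (hA i (by omega) (by omega)).2 p hp (le_max_left _ _)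
    have hBj := (hB (k - i) (by omega) (by omega)).2 q hq (by omega)
    omega

section Staircase

variable {S : Set (ℤ × ℤ)} {f : ℤ → ℤ} {lo hi : ℤ}
  (hS : ∀ s ∈ S, lo ≤ s.1 ∧ s.1 ≤ hi)
  (hf : ∀ k, lo ≤ k → k ≤ hi → IsLeast (Prod.snd '' {s ∈ S | s.1 ≤ k}) (f k))
include hS hf

theorem staircase_le_snd {s : ℤ × ℤ} (hs : s ∈ S) {k : ℤ} (hsk : s.1 ≤ k) (hk : k ≤ hi) :
    f k ≤ s.2 :=
  (isLeast_snd_image_sep_iff.1 (hf k ((hS s hs).1.trans hsk) hk)).2 s hs hsk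

theorem fst_eq_of_staircase_drop {s : ℤ × ℤ} (hs : s ∈ S) {k : ℤ} (hsk : s.1 ≤ k)
    (hk : k ≤ hi) (hsf : s.2 ≤ f k) (hdrop : k = lo ∨ f k < f (k - 1)) : s.1 = k := by
  by_contra hne
  have := (hS s hs).1
  have := staircase_le_snd hS hf hs (k := k - 1) (by omega) (by omega)
  omega

theorem staircase_drops_eq_minimal :
    {s : ℤ × ℤ | ∃ k, lo ≤ k ∧ k ≤ hi ∧ s = (k, f k) ∧ (k = lo ∨ f k < f (k - 1))} =
      {s | Minimal (· ∈ S) s} := by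
  ext s
  simp only [Set.mem_ofPred_eq, minimal_mem_prod_iff]
  constructor
  · rintro ⟨k, hlo, hhi, rfl, hdrop⟩
    obtain ⟨t, ht, htk, hft⟩ := (isLeast_snd_image_sep_iff.1 (hf k hlo hhi)).1
    have htk' := fst_eq_of_staircase_drop hS hf ht htk hhi hft.ge hdrop
    have htf : t = (k, f k) := Prod.ext htk' hft.symm
    refine ⟨htf ▸ ht, fun u hu ⟨hu1, hu2, hne⟩ => hne (Prod.ext ?_ ?_)⟩
    · exact fst_eq_of_staircase_drop hS hf hu hu1 hhi hu2 hdrop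
    · exact le_antisymm hu2 (staircase_le_snd hS hf hu hu1 hhi)
  · rintro ⟨hs, hmin⟩
    obtain ⟨hlo, hhi⟩ := hS s hs
    have hwitness (k : ℤ) (hlo : lo ≤ k) (hk : k ≤ s.1) (hfk : f k ≤ s.2) :
        k = s.1 ∧ f k = s.2 := by
      obtain ⟨t, ht, htk, hft⟩ := (isLeast_snd_image_sep_iff.1 (hf k hlo (hk.trans hhi))).1
      obtain rfl : t = s := by
        by_contra hne
        exact hmin t ht ⟨htk.trans hk, hft ▸ hfk, hne⟩
      exact ⟨le_antisymm hk htk, hft⟩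
    have hfs := (hwitness s.1 hlo le_rfl (staircase_le_snd hS hf hs le_rfl hhi)).2
    refine ⟨s.1, hlo, hhi, Prod.ext rfl hfs.symm, ?_⟩
    by_contra! h
    have := (hwitness (s.1 - 1) (by omega) (by omega) (by omega)).1
    omega

end Staircase

theorem pruned_conv_eq_pareto_sum_general (W : ℤ)
    (P Q : Set (ℤ × ℤ))
    (hPW : ∀ p ∈ P, 0 ≤ p.1 ∧ p.1 ≤ W ∧ 0 ≤ p.2 ∧ p.2 ≤ W)
    (hQW : ∀ q ∈ Q, 0 ≤ q.1 ∧ q.1 ≤ W ∧ 0 ≤ q.2 ∧ q.2 ≤ W)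
    (hP0 : ∃ p ∈ P, p.1 = 0) (hQ0 : ∃ q ∈ Q, q.1 = 0)
    (A B : ℤ → ℤ)
    (hA : ∀ i : ℤ, 0 ≤ i → i ≤ W →
      (((∃ p ∈ P, p.1 ≤ i) →
        (∃ p ∈ P, p.1 ≤ i ∧ A i = p.2) ∧ (∀ p ∈ P, p.1 ≤ i → A i ≤ p.2)) ∧
       ((∀ p ∈ P, ¬ p.1 ≤ i) → A i = W + 1)))
    (hB : ∀ i : ℤ, 0 ≤ i → i ≤ W →
      (((∃ q ∈ Q, q.1 ≤ i) →
        (∃ q ∈ Q, q.1 ≤ i ∧ B i = q.2) ∧ (∀ q ∈ Q, q.1 ≤ i → B i ≤ q.2)) ∧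
       ((∀ q ∈ Q, ¬ q.1 ≤ i) → B i = W + 1)))
    (C : ℤ → ℤ)
    (hC : ∀ k : ℤ, 0 ≤ k → k ≤ 2 * W →
      IsLeast {v : ℤ | ∃ i j : ℤ, 0 ≤ i ∧ i ≤ W ∧ 0 ≤ j ∧ j ≤ W ∧ i + j = k ∧ v = A i + B j}
        (C k)) :
    {s : ℤ × ℤ | ∃ k : ℤ, 0 ≤ k ∧ k ≤ 2 * W ∧ s = (k, C k) ∧ (k = 0 ∨ C k < C (k - 1))} =
    {s : ℤ × ℤ | (∃ p ∈ P, ∃ q ∈ Q, s = p + q) ∧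
      ∀ p ∈ P, ∀ q ∈ Q, ¬((p + q).1 ≤ s.1 ∧ (p + q).2 ≤ s.2 ∧ p + q ≠ s)} := by
  obtain ⟨p₀, hp₀, hp₀x⟩ := hP0
  obtain ⟨q₀, hq₀, hq₀x⟩ := hQ0
  have hAmin (i : ℤ) (hi0 : 0 ≤ i) (hiW : i ≤ W) :
      IsLeast (Prod.snd '' {p ∈ P | p.1 ≤ i}) (A i) :=
    isLeast_snd_image_sep_iff.2 ((hA i hi0 hiW).1 ⟨p₀, hp₀, by omega⟩)
  have hBmin (j : ℤ) (hj0 : 0 ≤ j) (hjW : j ≤ W) :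
      IsLeast (Prod.snd '' {q ∈ Q | q.1 ≤ j}) (B j) :=
    isLeast_snd_image_sep_iff.2 ((hB j hj0 hjW).1 ⟨q₀, hq₀, by omega⟩)
  have hsum : ∀ s ∈ P + Q, 0 ≤ s.1 ∧ s.1 ≤ 2 * W := by
    rintro _ ⟨p, hp, q, hq, rfl⟩
    have := hPW p hp
    have := hQW q hq
    simp only [Prod.fst_add]
    omega
  rw [staircase_drops_eq_minimal hsum fun k hk0 hkW =>
    isLeast_minkowski_of_conv (fun p hp => ⟨(hPW p hp).1, (hPW p hp).2.1⟩)
      (fun q hq => ⟨(hQW q hq).1, (hQW q hq).2.1⟩) hAmin hBmin hC hk0 hkW]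
  ext s
  rw [Set.mem_ofPred_eq, minimal_mem_prod_iff]
  simp only [Set.mem_add, eq_comm (b := s)]
  exact and_congr_right fun _ => Set.forall_mem_image2

/-- With the reduction arrays `A, B` derived from Pareto sets `P, Q`
and `C` their min-plus convolution, the set `S* = {(k, C[k]) : k = 0 or C[k] < C[k-1]}`
equals the Pareto sum of `P` and `Q`. -/
theorem pruned_conv_eq_pareto_sum (W : ℤ) (hW : 0 ≤ W)
    (P Q : Set (ℤ × ℤ))
    (hPareto_P : ∀ a ∈ P, ∀ b ∈ P, ¬(a.1 ≤ b.1 ∧ a.2 ≤ b.2 ∧ a ≠ b))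
    (hPareto_Q : ∀ a ∈ Q, ∀ b ∈ Q, ¬(a.1 ≤ b.1 ∧ a.2 ≤ b.2 ∧ a ≠ b))
    (hPW : ∀ p ∈ P, 0 ≤ p.1 ∧ p.1 ≤ W ∧ 0 ≤ p.2 ∧ p.2 ≤ W)
    (hQW : ∀ q ∈ Q, 0 ≤ q.1 ∧ q.1 ≤ W ∧ 0 ≤ q.2 ∧ q.2 ≤ W)
    (hP0 : ∃ p ∈ P, p.1 = 0) (hQ0 : ∃ q ∈ Q, q.1 = 0)
    (A B : ℤ → ℤ)
    (hA : ∀ i : ℤ, 0 ≤ i → i ≤ W →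
      (((∃ p ∈ P, p.1 ≤ i) →
        (∃ p ∈ P, p.1 ≤ i ∧ A i = p.2) ∧ (∀ p ∈ P, p.1 ≤ i → A i ≤ p.2)) ∧
       ((∀ p ∈ P, ¬ p.1 ≤ i) → A i = W + 1)))
    (hB : ∀ i : ℤ, 0 ≤ i → i ≤ W →
      (((∃ q ∈ Q, q.1 ≤ i) →
        (∃ q ∈ Q, q.1 ≤ i ∧ B i = q.2) ∧ (∀ q ∈ Q, q.1 ≤ i → B i ≤ q.2)) ∧
       ((∀ q ∈ Q, ¬ q.1 ≤ i) → B i = W + 1)))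
    (C : ℤ → ℤ)
    (hC : ∀ k : ℤ, 0 ≤ k → k ≤ 2 * W →
      IsLeast {v : ℤ | ∃ i j : ℤ, 0 ≤ i ∧ i ≤ W ∧ 0 ≤ j ∧ j ≤ W ∧ i + j = k ∧ v = A i + B j}
        (C k)) :
    {s : ℤ × ℤ | ∃ k : ℤ, 0 ≤ k ∧ k ≤ 2 * W ∧ s = (k, C k) ∧ (k = 0 ∨ C k < C (k - 1))} =
    {s : ℤ × ℤ | (∃ p ∈ P, ∃ q ∈ Q, s = p + q) ∧
      ∀ p ∈ P, ∀ q ∈ Q, ¬((p + q).1 ≤ s.1 ∧ (p + q).2 ≤ s.2 ∧ p + q ≠ s)} :=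
  pruned_conv_eq_pareto_sum_general W P Q hPW hQW hP0 hQ0 A B hA hB C hC
end

section
/- Let P, Q ⊆ ℝ² and t > 0. Define rounded sets P' = {(⌊p.x/t⌋, ⌊p.y/t⌋) : p ∈ P} and Q' similarly, and for each rounded point x' fix a representative rep(x') ∈ P (resp. Q) that rounds to x'. Let S' be the Pareto sum of P', Q', and Z = {rep(p') + rep(q') : p'+q' ∈ S'}. Then for every p ∈ P and q ∈ Q there exists z ∈ Z with z ≤ p + q + (2t, 2t) coordinatewise. -/
/-- With rounded sets `P', Q'`, representatives, the Pareto sum `S'`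
of `P', Q'` and `Z` the set of representative sums of elements of `S'`:
every `p + q` is `(2t,2t)`-dominated by some `z ∈ Z`. -/
theorem approx_pareto_sum_domination (t : ℝ) (ht : 0 < t)
    (P Q : Set (ℝ × ℝ)) (hPfin : P.Finite) (hQfin : Q.Finite)
    (rd : ℝ × ℝ → ℤ × ℤ) (hrd : ∀ x, rd x = (⌊x.1 / t⌋, ⌊x.2 / t⌋))
    (repP repQ : ℤ × ℤ → ℝ × ℝ)
    (hrepP : ∀ p ∈ P, repP (rd p) ∈ P ∧ rd (repP (rd p)) = rd p)
    (hrepQ : ∀ q ∈ Q, repQ (rd q) ∈ Q ∧ rd (repQ (rd q)) = rd q) :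
    ∀ p ∈ P, ∀ q ∈ Q, ∃ p' ∈ rd '' P, ∃ q' ∈ rd '' Q,
      -- p' + q' belongs to the Pareto sum S' of P', Q' (it is non-dominated in P' + Q')
      (∀ a ∈ rd '' P, ∀ b ∈ rd '' Q,
        ¬((a + b).1 ≤ (p' + q').1 ∧ (a + b).2 ≤ (p' + q').2 ∧ a + b ≠ p' + q')) ∧
      -- the corresponding element z = rep(p') + rep(q') of Z approximately dominates p + q
      repP p' + repQ q' ≤ p + q + (2 * t, 2 * t) := by
  intro p hp q hq
  -- candidate set: sums dominated by rd p + rd q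
  set S : Set (ℤ × ℤ) :=
    {x | (∃ a ∈ rd '' P, ∃ b ∈ rd '' Q, a + b = x) ∧ x ≤ rd p + rd q} with hS
  have hSsub : S ⊆ (fun ab : (ℤ×ℤ) × (ℤ×ℤ) => ab.1 + ab.2) '' ((rd '' P) ×ˢ (rd '' Q)) := by
    rintro x ⟨⟨a, ha, b, hb, rfl⟩, -⟩
    exact ⟨(a, b), ⟨ha, hb⟩, rfl⟩
  have hSfin : S.Finite :=
    Set.Finite.subset (((hPfin.image rd).prod (hQfin.image rd)).image _) hSsub
  have hSne : S.Nonempty :=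
    ⟨rd p + rd q, ⟨rd p, ⟨p, hp, rfl⟩, rd q, ⟨q, hq, rfl⟩, rfl⟩, le_refl _⟩
  obtain ⟨m, hmS, hmin⟩ := hSfin.exists_minimalFor id S hSne
  obtain ⟨⟨a, ha, b, hb, hab⟩, hmle⟩ := hmS
  refine ⟨a, ha, b, hb, ?_, ?_⟩
  · rintro a' ha' b' hb' ⟨h1, h2, hne⟩
    rw [hab] at h1 h2 hne
    have hle : a' + b' ≤ m := ⟨h1, h2⟩
    have hmem : a' + b' ∈ S :=
      ⟨⟨a', ha', b', hb', rfl⟩, le_trans hle hmle⟩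
    exact hne (le_antisymm hle (hmin hmem hle))
  · -- real inequality
    obtain ⟨p₀, hp₀, rfl⟩ := ha
    obtain ⟨q₀, hq₀, rfl⟩ := hb
    obtain ⟨hrpP, hrdP⟩ := hrepP p₀ hp₀
    obtain ⟨hrpQ, hrdQ⟩ := hrepQ q₀ hq₀
    -- coordinates
    rw [← hab] at hmle
    have hle1 : (rd p₀).1 + (rd q₀).1 ≤ (rd p).1 + (rd q).1 := hmle.1
    have hle2 : (rd p₀).2 + (rd q₀).2 ≤ (rd p).2 + (rd q).2 := hmle.2
    have key : ∀ (x y : ℝ × ℝ) (u v : ℝ × ℝ) (i : Bool),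
        True := fun _ _ _ _ _ => trivial
    have floor_lb : ∀ x : ℝ × ℝ, t * ((rd x).1 : ℝ) ≤ x.1 ∧ t * ((rd x).2 : ℝ) ≤ x.2 := by
      intro x
      rw [hrd]
      constructor
      · have := Int.floor_le (x.1 / t)
        calc t * (⌊x.1 / t⌋ : ℝ) ≤ t * (x.1 / t) := by nlinarith
          _ = x.1 := by field_simp
      · have := Int.floor_le (x.2 / t)
        calc t * (⌊x.2 / t⌋ : ℝ) ≤ t * (x.2 / t) := by nlinarith
          _ = x.2 := by field_simp
    have floor_ub : ∀ x : ℝ × ℝ, x.1 < t * ((rd x).1 + 1 : ℝ) ∧ x.2 < t * ((rd x).2 + 1 : ℝ) := by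
      intro x
      rw [hrd]
      constructor
      · have := Int.lt_floor_add_one (x.1 / t)
        have : x.1 / t * t < ((⌊x.1 / t⌋ : ℝ) + 1) * t := by nlinarith
        rw [div_mul_cancel₀ _ (ne_of_gt ht)] at this
        push_cast
        linarith
      · have := Int.lt_floor_add_one (x.2 / t)
        have : x.2 / t * t < ((⌊x.2 / t⌋ : ℝ) + 1) * t := by nlinarith
        rw [div_mul_cancel₀ _ (ne_of_gt ht)] at this
        push_cast
        linarith
    have hub1 := (floor_ub (repP (rd p₀))).1
    have hub2 := (floor_ub (repP (rd p₀))).2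
    have hub3 := (floor_ub (repQ (rd q₀))).1
    have hub4 := (floor_ub (repQ (rd q₀))).2
    rw [hrdP] at hub1 hub2
    rw [hrdQ] at hub3 hub4
    have hlb1 := (floor_lb p).1
    have hlb2 := (floor_lb p).2
    have hlb3 := (floor_lb q).1
    have hlb4 := (floor_lb q).2
    have hc1 : ((rd p₀).1 : ℝ) + (rd q₀).1 ≤ ((rd p).1 : ℝ) + (rd q).1 := by exact_mod_cast hle1
    have hc2 : ((rd p₀).2 : ℝ) + (rd q₀).2 ≤ ((rd p).2 : ℝ) + (rd q).2 := by exact_mod_cast hle2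
    constructor
    · show (repP (rd p₀)).1 + (repQ (rd q₀)).1 ≤ p.1 + q.1 + 2 * t
      nlinarith
    · show (repP (rd p₀)).2 + (repQ (rd q₀)).2 ≤ p.2 + q.2 + 2 * t
      nlinarith
end

section
/- Let P, Q ⊆ ℝ², Δ > 0, and Z ⊆ P+Q such that for all p ∈ P, q ∈ Q there exists z ∈ Z with z ≤ p+q+(Δ,Δ). Let S̃ be the Pareto front (set of non-dominated points) of Z. Then S̃ is a Δ-approximate Pareto sum of P and Q: (1) for all p ∈ P, q ∈ Q there exists s̃ ∈ S̃ with s̃ ≤ p+q+(Δ,Δ); (2) S̃ ⊆ P+Q; (3) S̃ is a Pareto set. -/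
/-- If `Z ⊆ P + Q` satisfies the `Δ`-domination condition, then the
Pareto front of `Z` is a `Δ`-approximate Pareto sum of `P` and `Q`. -/
theorem pareto_front_is_approx_pareto_sum (Δ : ℝ) (hΔ : 0 < Δ)
    (P Q Z : Set (ℝ × ℝ)) (hZfin : Z.Finite)
    (hZsub : Z ⊆ {s | ∃ p ∈ P, ∃ q ∈ Q, s = p + q})
    (hZdom : ∀ p ∈ P, ∀ q ∈ Q, ∃ z ∈ Z, z ≤ p + q + (Δ, Δ)) :
    (∀ p ∈ P, ∀ q ∈ Q, ∃ s ∈ {z ∈ Z | ∀ z' ∈ Z, ¬(z' ≤ z ∧ z' ≠ z)},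
        s ≤ p + q + (Δ, Δ)) ∧
    ({z ∈ Z | ∀ z' ∈ Z, ¬(z' ≤ z ∧ z' ≠ z)} ⊆ {s | ∃ p ∈ P, ∃ q ∈ Q, s = p + q}) ∧
    (∀ a ∈ {z ∈ Z | ∀ z' ∈ Z, ¬(z' ≤ z ∧ z' ≠ z)},
     ∀ b ∈ {z ∈ Z | ∀ z' ∈ Z, ¬(z' ≤ z ∧ z' ≠ z)}, ¬(a ≤ b ∧ a ≠ b)) := by
  have key : ∀ z ∈ Z, ∃ m ∈ {z ∈ Z | ∀ z' ∈ Z, ¬(z' ≤ z ∧ z' ≠ z)}, m ≤ z := by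
    intro z hz
    obtain ⟨m, ⟨hmZ, hmz⟩, hmin⟩ :=
      Set.Finite.exists_minimalFor id {z' ∈ Z | z' ≤ z}
        (hZfin.subset (Set.sep_subset _ _)) ⟨z, hz, le_rfl⟩
    refine ⟨m, ⟨hmZ, ?_⟩, hmz⟩
    intro z' hz' ⟨hle, hne⟩
    exact hne (le_antisymm hle (hmin ⟨hz', hle.trans hmz⟩ hle))
  refine ⟨?_, ?_, ?_⟩
  · intro p hp q hq
    obtain ⟨z, hzZ, hzle⟩ := hZdom p hp q hq
    obtain ⟨m, hm, hmz⟩ := key z hzZ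
    exact ⟨m, hm, hmz.trans hzle⟩
  · exact fun s hs => hZsub hs.1
  · intro a ha b hb ⟨hle, hne⟩
    exact hb.2 a ha.1 ⟨hle, hne⟩
end

section
/- Let A, B be monotone decreasing arrays of length n. Suppose A and B are partitioned into maximal constant-value intervals with left endpoints a_0 < a_1 < ... < a_{m-1} and b_0 < ... < b_{ℓ-1} respectively. Define C by initializing C[k] = ∞, setting C[a_i + b_j] := min(C[a_i+b_j], A[a_i]+B[b_j]) for all i, j, and then propagating C[k] := min(C[k], C[k-1]) for increasing k. Then C equals the min-plus convolution of A and B. -/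
/-- Correctness of the enhanced min-plus convolution algorithm:
taking minima only over left endpoints of constant-value intervals of the monotone
decreasing arrays `A, B` and then propagating prefix minima yields the exact
min-plus convolution. -/
theorem enhanced_minplus_correct (n m ℓ : ℕ)
    (A B : Fin n → ℤ) (hA : Antitone A) (hB : Antitone B)
    (a : Fin m → Fin n) (b : Fin ℓ → Fin n)
    (hamono : StrictMono a) (hbmono : StrictMono b)
    -- every index lies in a constant-value interval with left endpoint among the `a j`
    (ha : ∀ i : Fin n, ∃ j : Fin m, a j ≤ i ∧ A i = A (a j))
    (hb : ∀ i : Fin n, ∃ j : Fin ℓ, b j ≤ i ∧ B i = B (b j))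
    (C₀ C : ℕ → WithTop ℤ)
    (hC₀ : ∀ k, C₀ k = Finset.univ.inf (fun ij : Fin m × Fin ℓ =>
      if (a ij.1 : ℕ) + (b ij.2 : ℕ) = k
      then ((A (a ij.1) + B (b ij.2) : ℤ) : WithTop ℤ) else ⊤))
    (hC0 : C 0 = C₀ 0)
    (hCk : ∀ k, C (k + 1) = min (C₀ (k + 1)) (C k)) :
    ∀ k, k ≤ 2 * n - 2 →
      C k = Finset.univ.inf (fun ij : Fin n × Fin n =>
        if (ij.1 : ℕ) + (ij.2 : ℕ) = k
        then ((A ij.1 + B ij.2 : ℤ) : WithTop ℤ) else ⊤) := by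
  have hCpref : ∀ k, C k = (Finset.range (k+1)).inf C₀ := by
    intro k
    induction k with
    | zero => simpa using hC0
    | succ k ih =>
      rw [hCk k, ih, Finset.range_add_one (n := k+1), Finset.inf_insert]
  intro k hk
  apply le_antisymm
  · -- C k ≤ Conv k
    apply Finset.le_inf
    intro ij _
    by_cases hij : (ij.1 : ℕ) + (ij.2 : ℕ) = k
    · rw [if_pos hij]
      obtain ⟨p, hp, hAp⟩ := ha ij.1
      obtain ⟨q, hq, hBq⟩ := hb ij.2
      rw [hAp, hBq]
      have hp' : (a p : ℕ) ≤ (ij.1 : ℕ) := hp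
      have hq' : (b q : ℕ) ≤ (ij.2 : ℕ) := hq
      have hmem : (a p : ℕ) + (b q : ℕ) ∈ Finset.range (k+1) := by
        simp only [Finset.mem_range]; omega
      calc C k ≤ C₀ ((a p : ℕ) + (b q : ℕ)) := by
            rw [hCpref]; exact Finset.inf_le hmem
        _ ≤ ((A (a p) + B (b q) : ℤ) : WithTop ℤ) := by
            rw [hC₀]
            have h := Finset.inf_le (f := fun ij : Fin m × Fin ℓ =>
              if (a ij.1 : ℕ) + (b ij.2 : ℕ) = (a p : ℕ) + (b q : ℕ)
              then ((A (a ij.1) + B (b ij.2) : ℤ) : WithTop ℤ) else ⊤)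
              (Finset.mem_univ (p, q))
            simpa using h
    · rw [if_neg hij]; exact le_top
  · -- Conv k ≤ C k
    rw [hCpref]
    apply Finset.le_inf
    intro k' hk'
    rw [Finset.mem_range] at hk'
    rw [hC₀]
    apply Finset.le_inf
    intro pq _
    by_cases hpq : (a pq.1 : ℕ) + (b pq.2 : ℕ) = k'
    · rw [if_pos hpq]
      have hi0 : (a pq.1 : ℕ) < n := (a pq.1).isLt
      have hj0 : (b pq.2 : ℕ) < n := (b pq.2).isLt
      have h1 : min (n-1) (k - (b pq.2 : ℕ)) < n := by omega
      have h2 : k - min (n-1) (k - (b pq.2 : ℕ)) < n := by omega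
      set i1 : Fin n := ⟨min (n-1) (k - (b pq.2 : ℕ)), h1⟩ with hi1
      set j1 : Fin n := ⟨k - min (n-1) (k - (b pq.2 : ℕ)), h2⟩ with hj1
      have hsum : (i1 : ℕ) + (j1 : ℕ) = k := by
        simp only [hi1, hj1]; omega
      have hle : A i1 + B j1 ≤ A (a pq.1) + B (b pq.2) := by
        refine add_le_add (hA ?_) (hB ?_)
        · rw [Fin.le_def]; simp only [hi1]; omega
        · rw [Fin.le_def]; simp only [hj1]; omega
      calc Finset.univ.inf (fun ij : Fin n × Fin n =>
            if (ij.1 : ℕ) + (ij.2 : ℕ) = k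
            then ((A ij.1 + B ij.2 : ℤ) : WithTop ℤ) else ⊤)
          ≤ (if (i1 : ℕ) + (j1 : ℕ) = k
            then ((A i1 + B j1 : ℤ) : WithTop ℤ) else ⊤) :=
            Finset.inf_le (Finset.mem_univ (i1, j1))
        _ ≤ ((A (a pq.1) + B (b pq.2) : ℤ) : WithTop ℤ) := by
            rw [if_pos hsum]; exact_mod_cast hle
    · rw [if_neg hpq]; exact le_top
end

section
/- Let P, Q ⊆ ℝ≥0² be finite sets and let S̃ be a Δ-approximate Pareto sum of P and Q with S̃ ⊆ P+Q. If all coordinates of points in P and Q are integer multiples of 2Δ, then S̃ equals the exact Pareto sum of P and Q. -/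
private lemma coord_key (Δ : ℝ) (hΔ : 0 < Δ) (a b : ℤ)
    (h : (a : ℝ) * (2 * Δ) ≤ (b : ℝ) * (2 * Δ) + Δ) :
    (a : ℝ) * (2 * Δ) ≤ (b : ℝ) * (2 * Δ) := by
  have h1 : (a : ℝ) < (b : ℝ) + 1 := by nlinarith
  have h2 : a ≤ b := by
    have : a < b + 1 := by exact_mod_cast (by push_cast; linarith : (a : ℝ) < ((b : ℤ) : ℝ) + 1)
    omega
  have : (a : ℝ) ≤ b := by exact_mod_cast h2
  nlinarith

/-- If all coordinates of points in `P, Q` are integer multiples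
of `2Δ`, then any `Δ`-approximate Pareto sum `S` of `P, Q` equals the exact
Pareto sum. -/
theorem approx_is_exact_on_scaled_instances (Δ : ℝ) (hΔ : 0 < Δ)
    (P Q S : Set (ℝ × ℝ)) (hPfin : P.Finite) (hQfin : Q.Finite)
    (hPpos : ∀ p ∈ P, 0 ≤ p.1 ∧ 0 ≤ p.2)
    (hQpos : ∀ q ∈ Q, 0 ≤ q.1 ∧ 0 ≤ q.2)
    (hPmul : ∀ p ∈ P, ∃ a b : ℤ, p = ((a : ℝ) * (2 * Δ), (b : ℝ) * (2 * Δ)))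
    (hQmul : ∀ q ∈ Q, ∃ a b : ℤ, q = ((a : ℝ) * (2 * Δ), (b : ℝ) * (2 * Δ)))
    (hS1 : ∀ p ∈ P, ∀ q ∈ Q, ∃ s ∈ S, s ≤ p + q + (Δ, Δ))
    (hS2 : S ⊆ {s | ∃ p ∈ P, ∃ q ∈ Q, s = p + q})
    (hS3 : ∀ a ∈ S, ∀ b ∈ S, ¬(a ≤ b ∧ a ≠ b)) :
    S = {s | (∃ p ∈ P, ∃ q ∈ Q, s = p + q) ∧
      ∀ p ∈ P, ∀ q ∈ Q, ¬(p + q ≤ s ∧ p + q ≠ s)} := by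
  -- key: if s ∈ P+Q and s ≤ p+q+(Δ,Δ) with p∈P,q∈Q, then s ≤ p+q
  have key : ∀ s ∈ S, ∀ p ∈ P, ∀ q ∈ Q, s ≤ p + q + (Δ, Δ) → s ≤ p + q := by
    intro s hs p hp q hq hle
    obtain ⟨p', hp', q', hq', hseq⟩ := hS2 hs
    obtain ⟨a1, b1, hp'eq⟩ := hPmul p' hp'
    obtain ⟨a2, b2, hq'eq⟩ := hQmul q' hq'
    obtain ⟨a3, b3, hpeq⟩ := hPmul p hp
    obtain ⟨a4, b4, hqeq⟩ := hQmul q hq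
    subst hseq hp'eq hq'eq hpeq hqeq
    rw [Prod.le_def] at hle ⊢
    simp only [Prod.fst_add, Prod.snd_add] at hle ⊢
    constructor
    · have := coord_key Δ hΔ (a1 + a2) (a3 + a4) (by push_cast; linarith [hle.1])
      push_cast at this ⊢; linarith
    · have := coord_key Δ hΔ (b1 + b2) (b3 + b4) (by push_cast; linarith [hle.2])
      push_cast at this ⊢; linarith
  ext s
  simp only [Set.mem_setOf_eq]
  constructor
  · intro hs
    refine ⟨hS2 hs, ?_⟩
    rintro p hp q hq ⟨hle, hne⟩
    obtain ⟨s', hs', hs'le⟩ := hS1 p hp q hq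
    have h1 : s' ≤ p + q := key s' hs' p hp q hq hs'le
    have h2 : s' ≤ s := le_trans h1 hle
    have h3 : s' = s := by
      by_contra h
      exact hS3 s' hs' s hs ⟨h2, h⟩
    subst h3
    exact hne (le_antisymm hle h1)
  · rintro ⟨⟨p, hp, q, hq, hseq⟩, hmin⟩
    obtain ⟨s', hs', hs'le⟩ := hS1 p hp q hq
    have h1 : s' ≤ p + q := key s' hs' p hp q hq hs'le
    obtain ⟨p', hp', q', hq', hs'eq⟩ := hS2 hs'
    have h2 : s' = s := by
      by_contra h
      exact hmin p' hp' q' hq' ⟨hs'eq ▸ (hseq ▸ h1), hs'eq ▸ h⟩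
    exact h2 ▸ hs'
end

section
/- Let P, Q ⊆ ℝ² and t > 0. Define P̃ = {(⌈p.x/t⌉, ⌈p.y/t⌉) : p ∈ P}, Q̃ similarly, let S' be the Pareto sum of P̃ and Q̃, and S̃ the Pareto front of {t·s' : s' ∈ S'}. Then for every s̃ ∈ S̃ there exist p ∈ P, q ∈ Q with p+q ≤ s̃ ≤ p+q+(2t,2t) coordinatewise. -/
/-- The Pareto front of a set: its non-dominated points. -/
def paretoFront {α : Type*} [LE α] (T : Set α) : Set α :=
  {s ∈ T | ∀ u ∈ T, ¬(u ≤ s ∧ u ≠ s)}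

/-- The Minkowski sum of two sets. -/
def mink {α : Type*} [Add α] (P Q : Set α) : Set α :=
  {s | ∃ p ∈ P, ∃ q ∈ Q, s = p + q}

/-! A point of `S̃` lies in particular in `t • (P̃ + Q̃)`, so it is `t (⌈p/t⌉ + ⌈q/t⌉)` for some
`p ∈ P`, `q ∈ Q`; rounding up to the grid `tℤ` moves each coordinate of `p` and of `q` up by at
most `t`. -/

theorem paretoFront_subset {α : Type*} [LE α] (T : Set α) : paretoFront T ⊆ T :=
  fun _ hs => hs.1

theorem le_mul_ceil_div {t : ℝ} (ht : 0 < t) (x : ℝ) : x ≤ t * ⌈x / t⌉ :=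
  (div_le_iff₀' ht).1 (Int.le_ceil _)

theorem mul_ceil_div_le {t : ℝ} (ht : 0 < t) (x : ℝ) : t * ⌈x / t⌉ ≤ x + t := by
  have h : (⌈x / t⌉ : ℝ) ≤ x / t + 1 := (Int.ceil_lt_add_one _).le
  calc t * ⌈x / t⌉ ≤ t * (x / t + 1) := mul_le_mul_of_nonneg_left h ht.le
    _ = x + t := by field_simp

theorem le_mul_ceil_div_prod {t : ℝ} (ht : 0 < t) (x : ℝ × ℝ) :
    x ≤ (t * ⌈x.1 / t⌉, t * ⌈x.2 / t⌉) ∧ (t * ⌈x.1 / t⌉, t * ⌈x.2 / t⌉) ≤ x + (t, t) :=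
  ⟨⟨le_mul_ceil_div ht _, le_mul_ceil_div ht _⟩, ⟨mul_ceil_div_le ht _, mul_ceil_div_le ht _⟩⟩

/-- With ceiling-rounded sets `P̃, Q̃`, the Pareto sum `S'` of
`P̃, Q̃`, and `S̃` the Pareto front of `{t·s' : s' ∈ S'}`: every `st ∈ S̃`
satisfies `p + q ≤ st ≤ p + q + (2t,2t)` for some `p ∈ P`, `q ∈ Q`. -/
theorem weak_approx_soundness (t : ℝ) (ht : 0 < t) (P Q : Set (ℝ × ℝ)) :
    ∀ st ∈ paretoFront ((fun s' : ℤ × ℤ => ((t * s'.1, t * s'.2) : ℝ × ℝ)) ''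
      paretoFront (mink ((fun x : ℝ × ℝ => ((⌈x.1 / t⌉, ⌈x.2 / t⌉) : ℤ × ℤ)) '' P)
                        ((fun x : ℝ × ℝ => ((⌈x.1 / t⌉, ⌈x.2 / t⌉) : ℤ × ℤ)) '' Q))),
      ∃ p ∈ P, ∃ q ∈ Q, p + q ≤ st ∧ st ≤ p + q + (2 * t, 2 * t) := by
  intro st hst
  obtain ⟨s', hs', rfl⟩ := paretoFront_subset _ hst
  obtain ⟨_, ⟨p, hp, rfl⟩, _, ⟨q, hq, rfl⟩, rfl⟩ := paretoFront_subset _ hs'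
  obtain ⟨hp_le, hle_p⟩ := le_mul_ceil_div_prod ht p
  obtain ⟨hq_le, hle_q⟩ := le_mul_ceil_div_prod ht q
  have hsplit : ((t * ↑(⌈p.1 / t⌉ + ⌈q.1 / t⌉), t * ↑(⌈p.2 / t⌉ + ⌈q.2 / t⌉)) : ℝ × ℝ) =
      (t * ⌈p.1 / t⌉, t * ⌈p.2 / t⌉) + (t * ⌈q.1 / t⌉, t * ⌈q.2 / t⌉) := by
    ext <;> simp only [Int.cast_add, Prod.fst_add, Prod.snd_add] <;> ring
  refine ⟨p, hp, q, hq, ?_, ?_⟩ <;> simp only [Prod.fst_add, Prod.snd_add, hsplit]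
  · exact add_le_add hp_le hq_le
  · calc _ ≤ p + (t, t) + (q + (t, t)) := add_le_add hle_p hle_q
      _ = p + q + (2 * t, 2 * t) := by ext <;> simp only [Prod.fst_add, Prod.snd_add] <;> ring
end

section
/- Let P, Q ⊆ ℝ² and t > 0. With P̃, Q̃ the ceiling-rounded sets scaled by 1/t, S' the Pareto sum of P̃, Q̃, and S̃ the Pareto front of {t·s' : s' ∈ S'}: for every p ∈ P and q ∈ Q there exists s̃ ∈ S̃ with s̃ ≤ p+q+(2t,2t) coordinatewise. -/
lemma exists_pareto_le {α : Type*} [PartialOrder α] {T : Set α} (hT : T.Finite)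
    {a : α} (ha : a ∈ T) : ∃ m ∈ paretoFront T, m ≤ a := by
  obtain ⟨m, ⟨hmT, hma⟩, hmin⟩ :=
    Set.Finite.exists_minimalFor id {x ∈ T | x ≤ a} (hT.subset (Set.sep_subset _ _)) ⟨a, ha, le_refl a⟩
  refine ⟨m, ⟨hmT, ?_⟩, hma⟩
  rintro u huT ⟨hum, hne⟩
  exact hne (le_antisymm hum (hmin ⟨huT, hum.trans hma⟩ hum))

/-- With ceiling-rounded sets `P̃, Q̃`, the Pareto sum `S'` of
`P̃, Q̃`, and `S̃` the Pareto front of `{t·s' : s' ∈ S'}`: for every `p ∈ P`,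
`q ∈ Q` there is `st ∈ S̃` with `st ≤ p + q + (2t,2t)`. -/
theorem weak_approx_domination (t : ℝ) (ht : 0 < t) (P Q : Set (ℝ × ℝ))
    (hPfin : P.Finite) (hQfin : Q.Finite) :
    ∀ p ∈ P, ∀ q ∈ Q,
      ∃ st ∈ paretoFront ((fun s' : ℤ × ℤ => ((t * s'.1, t * s'.2) : ℝ × ℝ)) ''
        paretoFront (mink ((fun x : ℝ × ℝ => ((⌈x.1 / t⌉, ⌈x.2 / t⌉) : ℤ × ℤ)) '' P)
                          ((fun x : ℝ × ℝ => ((⌈x.1 / t⌉, ⌈x.2 / t⌉) : ℤ × ℤ)) '' Q))),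
        st ≤ p + q + (2 * t, 2 * t) := by
  intro p hp q hq
  set f : ℝ × ℝ → ℤ × ℤ := fun x => (⌈x.1 / t⌉, ⌈x.2 / t⌉) with hf
  set g : ℤ × ℤ → ℝ × ℝ := fun s' => (t * s'.1, t * s'.2) with hg
  have hMfin : (mink (f '' P) (f '' Q)).Finite := by
    refine (Set.Finite.image2 (· + ·) (hPfin.image f) (hQfin.image f)).subset ?_
    rintro s ⟨a, ha, b, hb, rfl⟩
    exact ⟨a, ha, b, hb, rfl⟩
  have hρ : f p + f q ∈ mink (f '' P) (f '' Q) :=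
    ⟨f p, ⟨p, hp, rfl⟩, f q, ⟨q, hq, rfl⟩, rfl⟩
  obtain ⟨m, hm, hmle⟩ := exists_pareto_le hMfin hρ
  have hSfin : (g '' paretoFront (mink (f '' P) (f '' Q))).Finite :=
    Set.Finite.image g (hMfin.subset (Set.sep_subset _ _))
  obtain ⟨st, hst, hstle⟩ := exists_pareto_le hSfin ⟨m, hm, rfl⟩
  refine ⟨st, hst, hstle.trans ?_⟩
  have hceil : ∀ x : ℝ, t * ⌈x / t⌉ ≤ x + t := by
    intro x
    have h1 : (⌈x / t⌉ : ℝ) < x / t + 1 := Int.ceil_lt_add_one _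
    have := (mul_lt_mul_iff_right₀ ht).2 h1
    rw [mul_add, mul_one, mul_div_cancel₀ _ ht.ne'] at this
    linarith
  have hm1 : (m.1 : ℝ) ≤ ((f p + f q).1 : ℤ) := by exact_mod_cast hmle.1
  have hm2 : (m.2 : ℝ) ≤ ((f p + f q).2 : ℤ) := by exact_mod_cast hmle.2
  constructor
  · show t * m.1 ≤ (p + q + (2 * t, 2 * t)).1
    have h1 := hceil p.1
    have h2 := hceil q.1
    have : t * (m.1 : ℝ) ≤ t * ((f p + f q).1 : ℤ) := by
      exact mul_le_mul_of_nonneg_left hm1 ht.le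
    simp only [hf, Prod.fst_add, Int.cast_add, Prod.fst, Prod.snd] at this
    simp only [Prod.fst_add]
    nlinarith
  · show t * m.2 ≤ (p + q + (2 * t, 2 * t)).2
    have h1 := hceil p.2
    have h2 := hceil q.2
    have : t * (m.2 : ℝ) ≤ t * ((f p + f q).2 : ℤ) := by
      exact mul_le_mul_of_nonneg_left hm2 ht.le
    simp only [hf, Prod.snd_add, Int.cast_add] at this
    simp only [Prod.snd_add]
    nlinarith
end
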